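/- arXiv:1811.06865 — 7 statements merged into one kernel-verified Lean document; each statement's English description precedes it below -/
import Mathlib

section
/- Let X be a Banach space, B a unital Banach algebra, and ψ : B(X) → B a continuous, surjective, non-injective algebra homomorphism. Then ψ maps the ideal of inessential operators E(X) into the Jacobson radical of B. In particular, if B is semisimple then E(X) ⊆ Ker(ψ). -/
open Function

/-- An operator is Fredholm if its kernel is finite-dimensional and its range is
finite-codimensional. -/
def IsFredholmOp {X : Type*} [NormedAddCommGroup X] [NormedSpace ℂ X]
    (f : X →L[ℂ] X) : Prop :=
  FiniteDimensional ℂ (LinearMap.ker (f : X →ₗ[ℂ] X)) ∧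
    FiniteDimensional ℂ (X ⧸ LinearMap.range (f : X →ₗ[ℂ] X))

/-- An operator `T` is inessential if `I + S * T` is Fredholm for every `S`. -/
def IsInessentialOp {X : Type*} [NormedAddCommGroup X] [NormedSpace ℂ X]
    (T : X →L[ℂ] X) : Prop :=
  ∀ S : X →L[ℂ] X, IsFredholmOp (1 + S * T)

/-!
A Fredholm operator `f` on a Banach space has a continuous left inverse `g` modulo finite-rank
operators (half of Atkinson's theorem). A non-injective homomorphism `ψ` on `B(X)` vanishes on some
`T₀ ≠ 0`, hence on every rank-one operator, since these all have the form `A * T₀ * C`, hence on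
every finite-rank operator. So `ψ g` is a left inverse of `ψ (1 + S * T) = 1 + ψ S * ψ T`, and by
surjectivity `1 + y * ψ T` is left invertible for every `y`, i.e. `ψ T` is in the radical.
-/

namespace LinearMap

variable {R M N : Type*} [Ring R] [AddCommGroup M] [AddCommGroup N] [Module R M] [Module R N]
  {f : M →ₗ[R] N} {P : Submodule R M} {Q : Submodule R N}

theorem ker_comp_subtype_coprod_subtype_eq_bot (hP : Disjoint P (ker f))
    (hQ : Disjoint (range f) Q) : ker ((f ∘ₗ P.subtype).coprod Q.subtype) = ⊥ := by
  rw [ker_coprod_of_disjoint_range, ker_comp, Submodule.ker_subtype,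
    Submodule.disjoint_iff_comap_eq_bot.mp hP]
  · exact Submodule.prod_bot
  · rw [Submodule.range_subtype]
    exact hQ.mono_left (range_comp_le_range _ _)

theorem range_comp_subtype_coprod_subtype_eq_top (hP : ker f ⊔ P = ⊤)
    (hQ : range f ⊔ Q = ⊤) : range ((f ∘ₗ P.subtype).coprod Q.subtype) = ⊤ := by
  rw [range_coprod, range_comp, Submodule.range_subtype, Submodule.range_subtype, ← hQ,
    ← Submodule.map_top, ← hP, Submodule.map_sup, le_ker_iff_map.mp le_rfl, bot_sup_eq]

end LinearMap

namespace ContinuousLinearMap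

section RankOne

variable {𝕜 E : Type*} [Field 𝕜] [TopologicalSpace 𝕜] [IsTopologicalRing 𝕜]
  [AddCommGroup E] [TopologicalSpace E] [Module 𝕜 E] [ContinuousSMul 𝕜 E] [SeparatingDual 𝕜 E]

theorem exists_mul_mul_eq_smulRight {T : E →L[𝕜] E} (hT : T ≠ 0) (φ : StrongDual 𝕜 E) (u : E) :
    ∃ A C : E →L[𝕜] E, A * T * C = φ.smulRight u := by
  obtain ⟨x, hx⟩ : ∃ x, T x ≠ 0 := by
    by_contra! h
    exact hT (ext h)
  obtain ⟨γ, hγ⟩ := SeparatingDual.exists_eq_one (R := 𝕜) hx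
  refine ⟨γ.smulRight u, φ.smulRight x, ?_⟩
  ext y
  simp [hγ]

end RankOne

section FiniteRank

variable {𝕜 E : Type*} [NontriviallyNormedField 𝕜] [CompleteSpace 𝕜]
  [NormedAddCommGroup E] [NormedSpace 𝕜 E]

theorem exists_eq_sum_smulRight (T : E →L[𝕜] E)
    [FiniteDimensional 𝕜 (LinearMap.range (T : E →ₗ[𝕜] E))] :
    ∃ (n : ℕ) (φ : Fin n → StrongDual 𝕜 E) (u : Fin n → E), T = ∑ i, (φ i).smulRight (u i) := by
  set V := LinearMap.range (T : E →ₗ[𝕜] E)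
  let b := Module.finBasis 𝕜 V
  let T' : E →L[𝕜] V := T.codRestrict V (LinearMap.mem_range_self _)
  refine ⟨_, fun i ↦ (LinearMap.toContinuousLinearMap (b.coord i)).comp T', fun i ↦ b i, ?_⟩
  ext x
  have h := congr_arg V.subtype (b.sum_repr (T' x))
  rw [map_sum] at h
  simpa [T'] using h.symm

theorem map_eq_zero_of_finiteDimensional_range [SeparatingDual 𝕜 E] {F B : Type*} [Ring B]
    [FunLike F (E →L[𝕜] E) B] [RingHomClass F (E →L[𝕜] E) B] (ψ : F) (hψ : ¬ Injective ψ)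
    (T : E →L[𝕜] E) [FiniteDimensional 𝕜 (LinearMap.range (T : E →ₗ[𝕜] E))] : ψ T = 0 := by
  obtain ⟨T₀, hψT₀, hT₀⟩ : ∃ T₀, ψ T₀ = 0 ∧ T₀ ≠ 0 := by
    simpa [injective_iff_map_eq_zero] using hψ
  obtain ⟨n, φ, u, rfl⟩ := exists_eq_sum_smulRight T
  refine (map_sum ψ _ _).trans (Finset.sum_eq_zero fun i _ ↦ ?_)
  obtain ⟨A, C, hAC⟩ := exists_mul_mul_eq_smulRight hT₀ (φ i) (u i)
  rw [← hAC, map_mul, map_mul, hψT₀, mul_zero, zero_mul]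

end FiniteRank

section Atkinson

open _root_.LinearMap (ker range)

variable {𝕜 E : Type*} [RCLike 𝕜] [NormedAddCommGroup E] [NormedSpace 𝕜 E] [CompleteSpace E]
  {f : E →L[𝕜] E}

theorem exists_range_mul_sub_one_le [FiniteDimensional 𝕜 (ker (f : E →ₗ[𝕜] E))]
    {N : Submodule 𝕜 E} [FiniteDimensional 𝕜 N] (hN : IsCompl (range (f : E →ₗ[𝕜] E)) N) :
    ∃ g : E →L[𝕜] E, range ((f * g - 1 : E →L[𝕜] E) : E →ₗ[𝕜] E) ≤ N := by
  obtain ⟨M, hM_closed, hM⟩ :=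
    (Submodule.ClosedComplemented.of_finiteDimensional (ker (f : E →ₗ[𝕜] E)))
      |>.exists_isClosed_isCompl
  have : CompleteSpace M := hM_closed.completeSpace_coe
  let e := ContinuousLinearEquiv.ofBijective ((f ∘L M.subtypeL).coprod N.subtypeL)
    (LinearMap.ker_comp_subtype_coprod_subtype_eq_bot hM.symm.disjoint hN.disjoint)
    (LinearMap.range_comp_subtype_coprod_subtype_eq_top hM.sup_eq_top hN.sup_eq_top)
  refine ⟨M.subtypeL ∘L fst 𝕜 M N ∘L e.symm, ?_⟩
  rintro _ ⟨y, rfl⟩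
  obtain ⟨⟨m, n⟩, rfl⟩ := e.surjective y
  have he : e (m, n) = f m + n := rfl
  change f (e.symm (e (m, n))).1 - e (m, n) ∈ N
  rw [e.symm_apply_apply, he, sub_add_cancel_left]
  exact neg_mem n.2

theorem exists_finiteDimensional_range_mul_sub_one
    [FiniteDimensional 𝕜 (ker (f : E →ₗ[𝕜] E))]
    [FiniteDimensional 𝕜 (E ⧸ range (f : E →ₗ[𝕜] E))] :
    ∃ g : E →L[𝕜] E, FiniteDimensional 𝕜 (range ((g * f - 1 : E →L[𝕜] E) : E →ₗ[𝕜] E)) := by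
  obtain ⟨N, hN⟩ := (range (f : E →ₗ[𝕜] E)).exists_isCompl
  have : FiniteDimensional 𝕜 N := (Submodule.quotientEquivOfIsCompl _ N hN).finiteDimensional
  obtain ⟨g, hg⟩ := exists_range_mul_sub_one_le hN
  refine ⟨g, Submodule.finiteDimensional_of_le (?_ : _ ≤ ker (f : E →ₗ[𝕜] E))⟩
  rintro _ ⟨x, rfl⟩
  -- `(f * g - 1) (f x)` lies in `range f ⊓ N = ⊥`, so `f ((g * f - 1) x) = 0`.
  have : f (g (f x)) - f x ∈ range (f : E →ₗ[𝕜] E) ⊓ N :=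
    ⟨⟨g (f x) - x, by simp⟩, hg ⟨f x, rfl⟩⟩
  rw [hN.inf_eq_bot] at this
  simpa [sub_eq_zero] using this

end Atkinson

end ContinuousLinearMap

theorem inessential_mapsTo_jacobson_general
    {X B : Type*} [NormedAddCommGroup X] [NormedSpace ℂ X] [CompleteSpace X]
    [NormedRing B] [NormedAlgebra ℂ B]
    (ψ : (X →L[ℂ] X) →ₐ[ℂ] B)
    (hsurj : Surjective ψ) (hninj : ¬ Injective ψ) :
    (∀ T : X →L[ℂ] X, IsInessentialOp T → ψ T ∈ Ideal.jacobson (⊥ : Ideal B)) ∧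
      (Ideal.jacobson (⊥ : Ideal B) = ⊥ →
        ∀ T : X →L[ℂ] X, IsInessentialOp T → ψ T = 0) := by
  have mem_jacobson : ∀ T, IsInessentialOp T → ψ T ∈ Ideal.jacobson (⊥ : Ideal B) := by
    intro T hT
    refine Ideal.mem_jacobson_iff.mpr fun y ↦ ?_
    obtain ⟨S, rfl⟩ := hsurj y
    obtain ⟨_, _⟩ := hT S
    obtain ⟨g, _⟩ := ContinuousLinearMap.exists_finiteDimensional_range_mul_sub_one (f := 1 + S * T)
    refine ⟨ψ g, Ideal.mem_bot.mpr ?_⟩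
    rw [← ContinuousLinearMap.map_eq_zero_of_finiteDimensional_range ψ hninj (g * (1 + S * T) - 1)]
    simp only [map_sub, map_mul, map_add, map_one, mul_add, mul_one, mul_assoc]
    abel
  exact ⟨mem_jacobson, fun hB T hT ↦ by simpa [hB] using mem_jacobson T hT⟩

/-- Let `X` be a Banach space, `B` a unital Banach algebra, and
`ψ : B(X) → B` a continuous, surjective, non-injective algebra homomorphism. Then `ψ` maps the
inessential operators into the Jacobson radical of `B`; in particular, if `B` is semisimple
then all inessential operators belong to `Ker ψ`. -/
theorem inessential_mapsTo_jacobson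
    {X B : Type*} [NormedAddCommGroup X] [NormedSpace ℂ X] [CompleteSpace X]
    [NormedRing B] [NormedAlgebra ℂ B] [CompleteSpace B]
    (ψ : (X →L[ℂ] X) →ₐ[ℂ] B) (hcont : Continuous ψ)
    (hsurj : Surjective ψ) (hninj : ¬ Injective ψ) :
    (∀ T : X →L[ℂ] X, IsInessentialOp T → ψ T ∈ Ideal.jacobson (⊥ : Ideal B)) ∧
      (Ideal.jacobson (⊥ : Ideal B) = ⊥ →
        ∀ T : X →L[ℂ] X, IsInessentialOp T → ψ T = 0) :=
  inessential_mapsTo_jacobson_general ψ hsurj hninj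
end

section
/- Let X be a Banach space such that the ideal E(X) of inessential operators is a maximal two-sided ideal in B(X) and X has a complemented subspace isomorphic to X ⊕ X. Then for every nonzero Banach space Y, every surjective algebra homomorphism ψ : B(X) → B(Y) is injective. -/
open Function

universe u

/-!
Suppose `ψ : B(X) → B(Y)` is surjective with nonzero kernel. A nonzero two-sided ideal of `B(X)`
contains every finite-rank operator, so `ψ` kills them; then `ψ` sends a Fredholm operator to a
left-invertible one, and for inessential `T` the element `ψ T` satisfies: `1 + b * ψ T` is
left-invertible for every `b ∈ B(Y)`, which forces `ψ T = 0`. Hence `E(X) ≤ ker ψ`, and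
`ker ψ` is strictly smaller than the preimage of the finite-rank operators on `Y`; maximality of
`E(X)` makes that preimage everything, so `Y` is finite-dimensional. Finally `X ⊕ X`
complemented in `X` gives `r₁ s₁ = 1`, `r₁ s₂ = 0`, `r₂ s₂ = 1` in `B(X)`, which cannot hold in
the nonzero Dedekind-finite ring `B(Y)`.
-/

open ContinuousLinearMap TwoSidedIdeal

section FiniteRank

variable (𝕜 E : Type*) [NontriviallyNormedField 𝕜] [NormedAddCommGroup E] [NormedSpace 𝕜 E]

def finiteRankIdeal : TwoSidedIdeal (E →L[𝕜] E) :=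
  .mk' {T | FiniteDimensional 𝕜 (LinearMap.range (T : E →ₗ[𝕜] E))}
    (show FiniteDimensional 𝕜 (LinearMap.range (0 : E →ₗ[𝕜] E)) by
      rw [LinearMap.range_zero]; infer_instance)
    (fun {a b} (ha : FiniteDimensional 𝕜 _) (hb : FiniteDimensional 𝕜 _) =>
      Submodule.finiteDimensional_of_le (LinearMap.range_add_le (a : E →ₗ[𝕜] E) b))
    (fun {a} (ha : FiniteDimensional 𝕜 _) =>
      show FiniteDimensional 𝕜 (LinearMap.range (-(a : E →ₗ[𝕜] E))) by
        rwa [LinearMap.range_neg])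
    (fun {a b} (hb : FiniteDimensional 𝕜 _) =>
      show FiniteDimensional 𝕜 (LinearMap.range ((a : E →ₗ[𝕜] E) ∘ₗ (b : E →ₗ[𝕜] E))) by
        rw [LinearMap.range_comp]; infer_instance)
    (fun {a b} (ha : FiniteDimensional 𝕜 _) =>
      show FiniteDimensional 𝕜 (LinearMap.range ((a : E →ₗ[𝕜] E) ∘ₗ (b : E →ₗ[𝕜] E))) from
        Submodule.finiteDimensional_of_le (LinearMap.range_comp_le_range _ _))

variable {𝕜 E}

theorem mem_finiteRankIdeal {T : E →L[𝕜] E} :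
    T ∈ finiteRankIdeal 𝕜 E ↔ FiniteDimensional 𝕜 (LinearMap.range (T : E →ₗ[𝕜] E)) :=
  mem_mk' ..

theorem smulRight_mem_finiteRankIdeal (f : E →L[𝕜] 𝕜) (v : E) :
    f.smulRight v ∈ finiteRankIdeal 𝕜 E := by
  refine mem_finiteRankIdeal.2 (Submodule.finiteDimensional_of_le (S₂ := 𝕜 ∙ v) ?_)
  rintro _ ⟨x, rfl⟩
  exact Submodule.smul_mem _ _ (Submodule.mem_span_singleton_self v)

theorem finiteDimensional_of_one_mem_finiteRankIdeal (h : 1 ∈ finiteRankIdeal 𝕜 E) :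
    FiniteDimensional 𝕜 E := by
  have h1 := mem_finiteRankIdeal.1 h
  rw [one_def, coe_id, LinearMap.range_id] at h1
  exact Submodule.topEquiv.finiteDimensional

variable [SeparatingDual 𝕜 E]

theorem finiteRankIdeal_ne_bot [Nontrivial E] : finiteRankIdeal 𝕜 E ≠ ⊥ := by
  obtain ⟨v, hv⟩ := exists_ne (0 : E)
  obtain ⟨f, hf⟩ := SeparatingDual.exists_eq_one (R := 𝕜) hv
  intro h
  have h0 := (mem_bot _).1 (h ▸ smulRight_mem_finiteRankIdeal f v)
  exact hv (by simpa [hf] using congr($h0 v))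

theorem smulRight_mem_of_ne_bot {J : TwoSidedIdeal (E →L[𝕜] E)} (hJ : J ≠ ⊥)
    (f : E →L[𝕜] 𝕜) (v : E) : f.smulRight v ∈ J := by
  obtain ⟨T, hTJ, hT⟩ : ∃ T ∈ J, T ≠ 0 := by
    by_contra! h
    exact hJ (eq_bot_iff.2 fun T hT => (mem_bot _).2 (h T hT))
  obtain ⟨x, hx⟩ : ∃ x, T x ≠ 0 := by simpa using DFunLike.ne_iff.1 hT
  obtain ⟨g, hg⟩ := SeparatingDual.exists_eq_one (R := 𝕜) hx
  have key : g.smulRight v * T * f.smulRight x = f.smulRight v := by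
    ext y
    simp [hg]
  exact key ▸ J.mul_mem_right _ _ (J.mul_mem_left _ _ hTJ)

theorem finiteRankIdeal_le_of_ne_bot [CompleteSpace 𝕜] {J : TwoSidedIdeal (E →L[𝕜] E)}
    (hJ : J ≠ ⊥) : finiteRankIdeal 𝕜 E ≤ J := by
  intro F hF
  have := mem_finiteRankIdeal.1 hF
  set R := LinearMap.range (F : E →ₗ[𝕜] E)
  let b := Module.finBasis 𝕜 R
  let F' : E →L[𝕜] R := F.codRestrict R (LinearMap.mem_range_self (F : E →ₗ[𝕜] E))
  have hsum : F = ∑ i, ((b.coord i).toContinuousLinearMap ∘L F').smulRight (b i : E) := by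
    ext x
    change ((F' x : R) : E) = _
    simp only [sum_apply, smulRight_apply, coe_comp, comp_apply,
      LinearMap.coe_toContinuousLinearMap', Module.Basis.coord_apply]
    conv_lhs => rw [← b.sum_repr (F' x)]
    simp only [Submodule.coe_sum, Submodule.coe_smul]
  rw [hsum]
  exact sum_mem fun i _ => smulRight_mem_of_ne_bot hJ _ _

theorem eq_zero_of_forall_exists_mul_one_add_mul_eq_one {a : E →L[𝕜] E}
    (h : ∀ b : E →L[𝕜] E, ∃ v, v * (1 + b * a) = 1) : a = 0 := by
  by_contra ha
  obtain ⟨x, hx⟩ : ∃ x, a x ≠ 0 := by simpa using DFunLike.ne_iff.1 ha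
  obtain ⟨g, hg⟩ := SeparatingDual.exists_eq_one (R := 𝕜) hx
  obtain ⟨v, hv⟩ := h (g.smulRight (-x))
  have hkill : (1 + g.smulRight (-x) * a) x = 0 := by simp [hg]
  have hx0 : x = 0 := by simpa [hkill] using congr($hv x).symm
  exact hx (by simp [hx0])

theorem ker_lt_comap_finiteRankIdeal [Nontrivial E] {R F : Type*} [Ring R]
    [FunLike F R (E →L[𝕜] E)] [RingHomClass F R (E →L[𝕜] E)] {ψ : F} (hψ : Surjective ψ) :
    ker ψ < comap ψ (finiteRankIdeal 𝕜 E) := by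
  refine SetLike.lt_iff_le_and_exists.2 ⟨fun T hT => ?_, ?_⟩
  · rw [mem_comap, (mem_ker _).1 hT]
    exact TwoSidedIdeal.zero_mem _
  · obtain ⟨q, hq, hq0⟩ : ∃ q ∈ finiteRankIdeal 𝕜 E, q ≠ 0 := by
      by_contra! h
      exact finiteRankIdeal_ne_bot (eq_bot_iff.2 fun T hT => (mem_bot _).2 (h T hT))
    obtain ⟨S, rfl⟩ := hψ q
    exact ⟨S, (mem_comap _).2 hq, fun hS => hq0 ((mem_ker _).1 hS)⟩

end FiniteRank

section Fredholm

theorem LinearMap.bijective_coprod_of_isCompl {R E F : Type*} [Ring R] [AddCommGroup E]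
    [Module R E] [AddCommGroup F] [Module R F] (U : E →ₗ[R] F) {W : Submodule R E}
    {M : Submodule R F} (hW : IsCompl (ker U) W) (hM : IsCompl (range U) M) :
    Bijective ((U ∘ₗ W.subtype).coprod M.subtype) := by
  constructor
  · rw [← ker_eq_bot, ker_eq_bot']
    rintro ⟨w, m⟩ h
    have hm : (m : F) = 0 := by
      refine Submodule.disjoint_def.1 hM.disjoint m ⟨-w, ?_⟩ m.2
      simpa [neg_eq_iff_add_eq_zero, add_comm] using h
    have hw : (w : E) = 0 := by
      refine Submodule.disjoint_def.1 hW.disjoint w ?_ w.2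
      simpa [hm] using h
    ext <;> simp [hw, hm]
  · intro x
    obtain ⟨_, ⟨z, rfl⟩, m, hm, rfl⟩ :=
      Submodule.mem_sup.1 (hM.sup_eq_top ▸ Submodule.mem_top : x ∈ range U ⊔ M)
    obtain ⟨n, hn, w, hw, rfl⟩ :=
      Submodule.mem_sup.1 (hW.sup_eq_top ▸ Submodule.mem_top : z ∈ ker U ⊔ W)
    exact ⟨(⟨w, hw⟩, ⟨m, hm⟩), by simp [mem_ker.1 hn]⟩

variable {X : Type*} [NormedAddCommGroup X] [NormedSpace ℂ X] [CompleteSpace X]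

/-- With `W` a closed complement of `ker U` and `M` a (finite-dimensional) complement of
`range U`, the map `(w, m) ↦ U w + m` is a topological isomorphism `W × M ≃ X` by the open mapping
theorem; `V` is the first component of its inverse. -/
theorem IsFredholmOp.exists_mul_eq_one_sub {U : X →L[ℂ] X} (hU : IsFredholmOp U) :
    ∃ V F : X →L[ℂ] X, V * U = 1 - F ∧ F ∈ finiteRankIdeal ℂ X := by
  obtain ⟨hker, hcoker⟩ := hU
  obtain ⟨W, hWc, hW⟩ := (Submodule.ClosedComplemented.of_finiteDimensional
    (LinearMap.ker (U : X →ₗ[ℂ] X))).exists_isClosed_isCompl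
  obtain ⟨M, hM⟩ := Submodule.exists_isCompl (LinearMap.range (U : X →ₗ[ℂ] X))
  have : FiniteDimensional ℂ M := (Submodule.quotientEquivOfIsCompl _ M hM).finiteDimensional
  have : CompleteSpace W := hWc.completeSpace_coe
  have hΦ := LinearMap.bijective_coprod_of_isCompl (U : X →ₗ[ℂ] X) hW hM
  let e := ContinuousLinearEquiv.ofBijective ((U ∘L W.subtypeL).coprod M.subtypeL)
    (LinearMap.ker_eq_bot.2 hΦ.1) (LinearMap.range_eq_top.2 hΦ.2)
  let V : X →L[ℂ] X := W.subtypeL ∘L fst ℂ W M ∘L (e.symm : X →L[ℂ] W × M)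
  have hUV : ∀ x, U (V (U x)) = U x := by
    intro x
    obtain ⟨⟨w, m⟩, hwm⟩ := hΦ.2 (U x)
    have hm : (m : X) = 0 := by
      refine Submodule.disjoint_def.1 hM.disjoint m ⟨x - w, ?_⟩ m.2
      simp [← hwm]
    have he : e.symm (U x) = (w, m) := e.symm_apply_eq.2 hwm.symm
    simpa [V, he, hm] using hwm
  refine ⟨V, 1 - V * U, (sub_sub_cancel _ _).symm, mem_finiteRankIdeal.2 ?_⟩
  refine Submodule.finiteDimensional_of_le (S₂ := LinearMap.ker (U : X →ₗ[ℂ] X)) ?_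
  rintro _ ⟨x, rfl⟩
  simp [hUV]

theorem map_eq_zero_of_isInessentialOp {Y F : Type*} [NormedAddCommGroup Y] [NormedSpace ℂ Y]
    [FunLike F (X →L[ℂ] X) (Y →L[ℂ] Y)] [RingHomClass F (X →L[ℂ] X) (Y →L[ℂ] Y)] {ψ : F}
    (hψ : Surjective ψ) (hFR : finiteRankIdeal ℂ X ≤ ker ψ) {T : X →L[ℂ] X}
    (hT : IsInessentialOp T) : ψ T = 0 := by
  refine eq_zero_of_forall_exists_mul_one_add_mul_eq_one fun b => ?_
  obtain ⟨S, rfl⟩ := hψ b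
  obtain ⟨V, F, hVU, hF⟩ := (hT S).exists_mul_eq_one_sub
  refine ⟨ψ V, ?_⟩
  rw [← map_one ψ, ← map_mul, ← map_add, ← map_mul, hVU, map_sub, map_one,
    (mem_ker ψ).1 (hFR hF), sub_zero]

end Fredholm

theorem exists_mul_eq_one_of_rangeEquivProd {R X : Type*} [Semiring R] [TopologicalSpace X]
    [AddCommMonoid X] [Module R X] [ContinuousAdd X] {P : X →L[R] X} (hP : IsIdempotentElem P)
    (e : LinearMap.range (P : X →ₗ[R] X) ≃L[R] X × X) :
    ∃ r₁ s₁ r₂ s₂ : X →L[R] X, r₁ * s₁ = 1 ∧ r₁ * s₂ = 0 ∧ r₂ * s₂ = 1 := by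
  set RP := LinearMap.range (P : X →ₗ[R] X)
  let p : X →L[R] RP := P.codRestrict RP (LinearMap.mem_range_self (P : X →ₗ[R] X))
  have hp : ∀ v : RP, p v = v := by
    rintro ⟨_, u, rfl⟩
    exact Subtype.ext congr($hP u)
  refine ⟨fst R X X ∘L e ∘L p, RP.subtypeL ∘L e.symm ∘L inl R X X,
    snd R X X ∘L e ∘L p, RP.subtypeL ∘L e.symm ∘L inr R X X, ?_, ?_, ?_⟩ <;>
  ext x <;> simp [hp]

instance {𝕜 E : Type*} [Field 𝕜] [TopologicalSpace E] [AddCommGroup E] [Module 𝕜 E]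
    [ContinuousAdd E] [FiniteDimensional 𝕜 E] : IsDedekindFiniteMonoid (E →L[𝕜] E) :=
  IsDedekindFiniteMonoid.of_injective toLinearMapRingHom coe_injective

theorem subsingleton_of_mul_eq_one_of_mul_eq_zero {M₀ : Type*} [MonoidWithZero M₀]
    [IsDedekindFiniteMonoid M₀] {r₁ s₁ r₂ s₂ : M₀} (h₁ : r₁ * s₁ = 1) (h₁₂ : r₁ * s₂ = 0)
    (h₂ : r₂ * s₂ = 1) : Subsingleton M₀ := by
  have hs₂ : s₂ = 0 := by rw [← one_mul s₂, ← mul_eq_one_symm h₁, mul_assoc, h₁₂, mul_zero]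
  exact subsingleton_of_zero_eq_one (by rw [← h₂, hs₂, mul_zero])

/-- If the inessential operators form a maximal two-sided ideal of `B(X)` and
`X` has a complemented subspace isomorphic to `X ⊕ X`, then for every nonzero Banach space `Y`
every surjective algebra homomorphism `ψ : B(X) → B(Y)` is injective. -/
theorem shai_of_inessential_maximal
    {X : Type*} [NormedAddCommGroup X] [NormedSpace ℂ X] [CompleteSpace X]
    (I : TwoSidedIdeal (X →L[ℂ] X))
    (hI : ∀ T : X →L[ℂ] X, T ∈ I ↔ IsInessentialOp T)
    (hmax : IsCoatom I)
    (hsq : ∃ P : X →L[ℂ] X, P * P = P ∧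
      Nonempty ((LinearMap.range (P : X →ₗ[ℂ] X)) ≃L[ℂ] (X × X))) :
    ∀ (Y : Type u) [NormedAddCommGroup Y] [NormedSpace ℂ Y] [CompleteSpace Y],
      Nontrivial Y →
        ∀ ψ : (X →L[ℂ] X) →ₐ[ℂ] (Y →L[ℂ] Y), Surjective ψ → Injective ψ := by
  intro Y _ _ _ _ ψ hψ
  rw [← TwoSidedIdeal.ker_eq_bot]
  by_contra hker
  have hIker : I ≤ ker ψ := fun T hT =>
    (mem_ker ψ).2 (map_eq_zero_of_isInessentialOp hψ (finiteRankIdeal_le_of_ne_bot hker)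
      ((hI T).1 hT))
  have hcomap : comap ψ (finiteRankIdeal ℂ Y) = ⊤ :=
    hmax.2 _ (hIker.trans_lt (ker_lt_comap_finiteRankIdeal hψ))
  have h1 : (1 : X →L[ℂ] X) ∈ comap ψ (finiteRankIdeal ℂ Y) := hcomap ▸ mem_top _
  have : FiniteDimensional ℂ Y :=
    finiteDimensional_of_one_mem_finiteRankIdeal (map_one ψ ▸ (mem_comap ψ).1 h1)
  obtain ⟨P, hP, ⟨e⟩⟩ := hsq
  obtain ⟨r₁, s₁, r₂, s₂, h₁, h₁₂, h₂⟩ := exists_mul_eq_one_of_rangeEquivProd hP e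
  refine not_subsingleton (Y →L[ℂ] Y) (subsingleton_of_mul_eq_one_of_mul_eq_zero
    (r₁ := ψ r₁) (s₁ := ψ s₁) (r₂ := ψ r₂) (s₂ := ψ s₂) ?_ ?_ ?_) <;>
  simp [← map_mul, h₁, h₁₂, h₂]
end

section
/- Let H be a complex Hilbert space and J a closed two-sided ideal in B(H). For every self-adjoint idempotent p in the quotient C*-algebra B(H)/J there exists an orthogonal projection P ∈ B(H) with π(P) = p, where π : B(H) → B(H)/J is the quotient map. -/
/-!
Replacing the lift `a` by its real part `b` keeps it idempotent modulo `J`. Put `s = 2b - 1`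
and let `e = s₊`, `f = s₋` be its positive and negative parts. Then `e * f = 0`, and both
`e - b` and `1 - e - f = 1 - |s|` are continuous functions of `b` that factor through `b² - b`,
so they lie in `J`. The orthogonal projection `P` onto the closure of the range of `e` fixes `e`
and kills `f` (whose range lies in `ker e`), hence `P - e = P (1 - e - f) ∈ J`.
-/

open ComplexStarModule

namespace TwoSidedIdeal

variable {A : Type*}

lemma mul_self_sub_mem_of_sub_mem [Ring A] (J : TwoSidedIdeal A) {a b : A} (hba : b - a ∈ J)
    (ha : a * a - a ∈ J) : b * b - b ∈ J := by
  have : b * b - b = b * (b - a) + (b - a) * a + (a * a - a) - (b - a) := by noncomm_ring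
  rw [this]
  exact J.sub_mem
    (J.add_mem (J.add_mem (J.mul_mem_left _ _ hba) (J.mul_mem_right _ _ hba)) ha) hba

lemma realPart_sub_mem [Ring A] [StarRing A] [Algebra ℂ A] [StarModule ℂ A]
    (J : TwoSidedIdeal A) {a : A} (ha : star a - a ∈ J) : (ℜ a : A) - a ∈ J := by
  have : (ℜ a : A) - a = algebraMap ℂ A 2⁻¹ * (star a - a) := by
    rw [← Algebra.smul_def, realPart_apply_coe, ← Complex.coe_smul]
    push_cast
    module
  rw [this]
  exact J.mul_mem_left _ _ ha

section CStarAlgebra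

variable [CStarAlgebra A] (J : TwoSidedIdeal A) {b : A}

lemma cfc_mem_of_mul_self_sub_mem (hb : IsSelfAdjoint b) (hbJ : b * b - b ∈ J) {φ h : ℝ → ℝ}
    (hh : Continuous h) (hφ : ∀ t, φ t = h t * (t * t - t)) : cfc φ b ∈ J := by
  have : cfc φ b = cfc h b * (b * b - b) := by
    rw [funext hφ, cfc_mul h (fun t => t * t - t) b, cfc_sub (fun t : ℝ => t * t) (fun t => t) b,
      cfc_mul (fun t : ℝ => t) (fun t => t) b, cfc_id' ℝ b]
  rw [this]
  exact J.mul_mem_left _ _ hbJ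

lemma exists_orthogonal_pair_of_mul_self_sub_mem (hb : IsSelfAdjoint b) (hbJ : b * b - b ∈ J) :
    ∃ e f : A, IsSelfAdjoint e ∧ e * f = 0 ∧ e - b ∈ J ∧ 1 - e - f ∈ J := by
  set e := cfc (fun t : ℝ => max (2 * t - 1) 0) b
  set f := cfc (fun t : ℝ => max (1 - 2 * t) 0) b
  have hden : ∀ t : ℝ, 0 < 1 + |2 * t - 1| := fun t => by positivity
  have hcont : Continuous fun t : ℝ => (1 + |2 * t - 1|)⁻¹ :=
    (by fun_prop : Continuous fun t : ℝ => 1 + |2 * t - 1|).inv₀ fun t => (hden t).ne'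
  refine ⟨e, f, cfc_predicate _ b, ?_, ?_, ?_⟩
  · rw [← cfc_mul .., ← cfc_zero ℝ b]
    refine cfc_congr fun t _ => ?_
    rcases le_total t (1 / 2) with h | h
    · simp [max_eq_right (by linarith : 2 * t - 1 ≤ 0)]
    · simp [max_eq_right (by linarith : 1 - 2 * t ≤ 0)]
  · rw [← cfc_id' ℝ b, ← cfc_sub ..]
    refine cfc_mem_of_mul_self_sub_mem J hb hbJ (hcont.const_mul 2) fun t => ?_
    have := (hden t).ne'
    field_simp
    rcases le_total t (1 / 2) with h | h
    · rw [max_eq_right (by linarith), abs_of_nonpos (by linarith)]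
      ring
    · rw [max_eq_left (by linarith), abs_of_nonneg (by linarith)]
      ring
  · rw [← cfc_one ℝ b, ← cfc_sub .., ← cfc_sub ..]
    refine cfc_mem_of_mul_self_sub_mem J hb hbJ (hcont.const_mul (-4)) fun t => ?_
    have := (hden t).ne'
    simp only [Pi.one_apply]
    field_simp
    rcases le_total t (1 / 2) with h | h
    · rw [max_eq_right (by linarith), max_eq_left (by linarith), abs_of_nonpos (by linarith)]
      ring
    · rw [max_eq_left (by linarith), max_eq_right (by linarith), abs_of_nonneg (by linarith)]
      ring

end CStarAlgebra

end TwoSidedIdeal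

lemma exists_isStarProjection_mul_eq_self_of_mul_eq_zero {𝕜 H : Type*} [RCLike 𝕜]
    [NormedAddCommGroup H] [InnerProductSpace 𝕜 H] [CompleteSpace H] {e f : H →L[𝕜] H}
    (he : IsSelfAdjoint e) (hef : e * f = 0) :
    ∃ P : H →L[𝕜] H, IsStarProjection P ∧ P * e = e ∧ P * f = 0 := by
  set K := e.range.topologicalClosure
  refine ⟨K.starProjection, isStarProjection_starProjection, ?_, ?_⟩
  · ext x
    exact K.starProjection_eq_self_iff.mpr (e.range.le_topologicalClosure ⟨x, rfl⟩)
  · ext x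
    refine K.starProjection_apply_eq_zero_iff.mpr ?_
    rw [Submodule.orthogonal_closure, ContinuousLinearMap.orthogonal_range,
      ← ContinuousLinearMap.star_eq_adjoint, he.star_eq]
    exact congr($hef x)

theorem projection_lifting_hilbert_general
    {H : Type*} [NormedAddCommGroup H] [InnerProductSpace ℂ H] [CompleteSpace H]
    (J : TwoSidedIdeal (H →L[ℂ] H))
    (a : H →L[ℂ] H) (hidem : a * a - a ∈ J) (hsa : star a - a ∈ J) :
    ∃ P : H →L[ℂ] H, P * P = P ∧ IsSelfAdjoint P ∧ P - a ∈ J := by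
  have hre := J.realPart_sub_mem hsa
  obtain ⟨e, f, he, hef, heb, hJef⟩ :=
    J.exists_orthogonal_pair_of_mul_self_sub_mem (ℜ a).prop
      (J.mul_self_sub_mem_of_sub_mem hre hidem)
  obtain ⟨P, hP, hPe, hPf⟩ := exists_isStarProjection_mul_eq_self_of_mul_eq_zero he hef
  refine ⟨P, hP.isIdempotentElem.eq, hP.isSelfAdjoint, ?_⟩
  have : P - a = P * (1 - e - f) + (e - ℜ a) + (ℜ a - a) := by
    rw [mul_sub, mul_sub, hPe, hPf]
    noncomm_ring
  rw [this]
  exact add_mem (add_mem (J.mul_mem_left _ _ hJef) heb) hre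

/-- Let `H` be a complex Hilbert space and `J` a closed two-sided ideal of
`B(H)`. Every self-adjoint idempotent of the quotient `B(H)/J` lifts to an orthogonal
projection in `B(H)`. Formally: if `a : B(H)` represents a self-adjoint idempotent modulo `J`
(i.e. `a² - a ∈ J` and `a* - a ∈ J`), then there is a self-adjoint idempotent `P ∈ B(H)` with
`P - a ∈ J`, i.e. `π(P) = π(a)`. -/
theorem projection_lifting_hilbert
    {H : Type*} [NormedAddCommGroup H] [InnerProductSpace ℂ H] [CompleteSpace H]
    (J : TwoSidedIdeal (H →L[ℂ] H)) (hJ : IsClosed (J : Set (H →L[ℂ] H)))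
    (a : H →L[ℂ] H) (hidem : a * a - a ∈ J) (hsa : star a - a ∈ J) :
    ∃ P : H →L[ℂ] H, P * P = P ∧ IsSelfAdjoint P ∧ P - a ∈ J :=
  projection_lifting_hilbert_general J a hidem hsa
end

section
/- Let X be a Banach space and Q ∈ B(X) an idempotent (bounded projection) whose range is isomorphic as a Banach space to Ran(Q) ⊕ Ran(Q). Then there exist idempotents Q₁, Q₂ ∈ B(X) with Q₁Q₂ = 0 = Q₂Q₁, Q₁ + Q₂ = Q, and Q₁ ∼ Q and Q₂ ∼ Q (each equivalent to Q as idempotents). -/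
/-- If `Q ∈ B(X)` is an idempotent whose range is isomorphic to its square,
then `Q` splits as a sum `Q = Q₁ + Q₂` of mutually orthogonal idempotents, each equivalent
to `Q`. -/
theorem idempotent_splits_of_range_square
    {X : Type*} [NormedAddCommGroup X] [NormedSpace ℂ X] [CompleteSpace X]
    (Q : X →L[ℂ] X) (hQ : Q * Q = Q)
    (hsq : Nonempty ((LinearMap.range (Q : X →ₗ[ℂ] X)) ≃L[ℂ]
      ((LinearMap.range (Q : X →ₗ[ℂ] X)) × (LinearMap.range (Q : X →ₗ[ℂ] X))))) :
    ∃ Q₁ Q₂ : X →L[ℂ] X,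
      Q₁ * Q₁ = Q₁ ∧ Q₂ * Q₂ = Q₂ ∧
      Q₁ * Q₂ = 0 ∧ Q₂ * Q₁ = 0 ∧ Q₁ + Q₂ = Q ∧
      (∃ a b : X →L[ℂ] X, Q₁ = a * b ∧ Q = b * a) ∧
      (∃ a b : X →L[ℂ] X, Q₂ = a * b ∧ Q = b * a) := by
  obtain ⟨φ⟩ := hsq
  set R := LinearMap.range (Q : X →ₗ[ℂ] X) with hR
  have hmem : ∀ x, Q x ∈ R := fun x => ⟨x, rfl⟩
  let r : X →L[ℂ] R := Q.codRestrict R hmem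
  let ι : R →L[ℂ] X := R.subtypeL
  have hQQ : ∀ x, Q (Q x) = Q x := fun x => by
    conv_rhs => rw [← hQ]
    rfl
  have hrι : ∀ y : R, r (ι y) = y := by
    rintro ⟨y, x, hx⟩
    apply Subtype.ext
    show Q y = y
    rw [← hx]
    exact hQQ x
  let a₁ : R →L[ℂ] R := (ContinuousLinearMap.fst ℂ R R).comp (φ : R →L[ℂ] R × R)
  let a₂ : R →L[ℂ] R := (ContinuousLinearMap.snd ℂ R R).comp (φ : R →L[ℂ] R × R)
  let b₁ : R →L[ℂ] R := (φ.symm : R × R →L[ℂ] R).comp (ContinuousLinearMap.inl ℂ R R)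
  let b₂ : R →L[ℂ] R := (φ.symm : R × R →L[ℂ] R).comp (ContinuousLinearMap.inr ℂ R R)
  have h11 : ∀ y, a₁ (b₁ y) = y := fun y => by simp [a₁, b₁]
  have h22 : ∀ y, a₂ (b₂ y) = y := fun y => by simp [a₂, b₂]
  have h12 : ∀ y, a₁ (b₂ y) = 0 := fun y => by simp [a₁, b₂]
  have h21 : ∀ y, a₂ (b₁ y) = 0 := fun y => by simp [a₂, b₁]
  have hsum : ∀ y, b₁ (a₁ y) + b₂ (a₂ y) = y := fun y => by
    show φ.symm ((φ y).1, 0) + φ.symm (0, (φ y).2) = y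
    rw [← map_add]
    simp
  refine ⟨ι.comp ((b₁.comp a₁).comp r), ι.comp ((b₂.comp a₂).comp r),
    ?_, ?_, ?_, ?_, ?_,
    ⟨ι.comp (b₁.comp r), ι.comp (a₁.comp r), ?_, ?_⟩,
    ⟨ι.comp (b₂.comp r), ι.comp (a₂.comp r), ?_, ?_⟩⟩
  · ext x
    simp [ContinuousLinearMap.mul_apply, hrι, h11]
  · ext x
    simp [ContinuousLinearMap.mul_apply, hrι, h22]
  · ext x
    simp [ContinuousLinearMap.mul_apply, hrι, h12]
  · ext x
    simp [ContinuousLinearMap.mul_apply, hrι, h21]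
  · ext x
    show ι (b₁ (a₁ (r x))) + ι (b₂ (a₂ (r x))) = Q x
    rw [← map_add, hsum]
    rfl
  · ext x
    simp [ContinuousLinearMap.mul_apply, hrι]
  · ext x
    show Q x = ι (a₁ (r (ι (b₁ (r x)))))
    rw [hrι, h11]
    rfl
  · ext x
    simp [ContinuousLinearMap.mul_apply, hrι]
  · ext x
    show Q x = ι (a₂ (r (ι (b₂ (r x)))))
    rw [hrι, h22]
    rfl
end

section
/- Let X be a Banach space, J a closed two-sided ideal of B(X), and Q ∈ B(X) an idempotent with Ran(Q) isomorphic to its square and Q ∉ J. Then there exist mutually orthogonal idempotents Q₁, Q₂ ∈ B(X), both not in J, such that π(Q₁) < π(Q) and π(Q₂) < π(Q) in the idempotent order of B(X)/J, where π is the quotient map. -/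
/-!
Write `Q = ι ρ` with `ρ ι = 1` on `Y = Ran Q` and fix `φ : Y ≃ Y × Y`. Then
`aᵢ = ι φ⁻¹ inᵢ ρ` and `bᵢ = ι prᵢ φ ρ` satisfy `bᵢ aⱼ = δᵢⱼ Q` and `a₁ b₁ + a₂ b₂ = Q`, so
`Qᵢ = aᵢ bᵢ` are orthogonal idempotents with `Q₁ + Q₂ = Q`, each equivalent to `Q` via
`Q = bᵢ Qᵢ aᵢ`. Hence `Qᵢ ∈ J` would force `Q ∈ J`, and `Qᵢ - Q = -Qⱼ ∉ J` as well.
-/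

section Ring

variable {A : Type*} [Ring A]

theorem isIdempotentElem_mul_of_mul_eq {a b q : A} (hba : b * a = q) (haq : a * q = a) :
    IsIdempotentElem (a * b) := by
  rw [IsIdempotentElem, ← mul_assoc, mul_assoc a b a, hba, haq]

theorem mul_mul_mul_of_mul_eq {a b q : A} (hba : b * a = q) (haq : a * q = a) :
    b * (a * b) * a = q := by
  rw [← mul_assoc, hba, mul_assoc, hba]
  nth_rewrite 1 [← hba]
  rw [mul_assoc, haq, hba]

theorem TwoSidedIdeal.mem_of_mul_mem {J : TwoSidedIdeal A} {a b q : A} (hba : b * a = q)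
    (haq : a * q = a) (h : a * b ∈ J) : q ∈ J :=
  mul_mul_mul_of_mul_eq hba haq ▸ J.mul_mem_right _ _ (J.mul_mem_left _ _ h)

/-- For idempotents `p, q`, this says `π p < π q` in the idempotent order of `A ⧸ J`. -/
def TwoSidedIdeal.IsStrictlyBelowMod (J : TwoSidedIdeal A) (p q : A) : Prop :=
  q * p - p ∈ J ∧ p * q - p ∈ J ∧ p - q ∉ J

theorem TwoSidedIdeal.isStrictlyBelowMod_of_add_eq (J : TwoSidedIdeal A) {q p₁ p₂ : A}
    (hp₁ : IsIdempotentElem p₁) (h₁₂ : p₁ * p₂ = 0) (h₂₁ : p₂ * p₁ = 0) (hsum : p₁ + p₂ = q)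
    (hq₁ : p₁ ∈ J → q ∈ J) (hq₂ : p₂ ∈ J → q ∈ J) (hq : q ∉ J) :
    p₁ ∉ J ∧ J.IsStrictlyBelowMod p₁ q := by
  have hqp : q * p₁ = p₁ := by rw [← hsum, add_mul, hp₁.eq, h₂₁, add_zero]
  have hpq : p₁ * q = p₁ := by rw [← hsum, mul_add, hp₁.eq, h₁₂, add_zero]
  have hdiff : p₁ - q = -p₂ := by rw [← hsum]; abel
  refine ⟨mt hq₁ hq, ?_, ?_, ?_⟩
  · simp [hqp, J.zero_mem]
  · simp [hpq, J.zero_mem]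
  · rw [hdiff]
    exact fun h => hq (hq₂ (by simpa using J.neg_mem h))

end Ring

section Retract

variable {R : Type*} [Ring R] {X Y : Type*} [TopologicalSpace X] [AddCommGroup X] [Module R X]
  [TopologicalSpace Y] [AddCommGroup Y] [Module R Y]

theorem ContinuousLinearMap.IsIdempotentElem.codRestrict_range_comp_subtypeL {Q : X →L[R] X}
    (hQ : IsIdempotentElem Q) :
    (Q.codRestrict (LinearMap.range (Q : X →ₗ[R] X)) fun x => ⟨x, rfl⟩) ∘L
      (LinearMap.range (Q : X →ₗ[R] X)).subtypeL = .id R _ := by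
  ext ⟨_, x, rfl⟩
  exact congr($hQ x)

theorem exists_halving_of_retract_equiv_prod [IsTopologicalAddGroup X] {q : X →L[R] X}
    (ι : Y →L[R] X) (ρ : X →L[R] Y) (hρι : ρ ∘L ι = .id R Y) (hιρ : ι ∘L ρ = q) (φ : Y ≃L[R] Y × Y) :
    ∃ a₁ b₁ a₂ b₂ : X →L[R] X, b₁ * a₁ = q ∧ b₂ * a₂ = q ∧ b₁ * a₂ = 0 ∧ b₂ * a₁ = 0 ∧
      a₁ * q = a₁ ∧ a₂ * q = a₂ ∧ a₁ * b₁ + a₂ * b₂ = q := by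
  subst hιρ
  have hρι' : ∀ y, ρ (ι y) = y := fun y => congr($hρι y)
  refine ⟨ι ∘L (φ.symm : Y × Y →L[R] Y) ∘L .inl R Y Y ∘L ρ,
    ι ∘L .fst R Y Y ∘L (φ : Y →L[R] Y × Y) ∘L ρ,
    ι ∘L (φ.symm : Y × Y →L[R] Y) ∘L .inr R Y Y ∘L ρ,
    ι ∘L .snd R Y Y ∘L (φ : Y →L[R] Y × Y) ∘L ρ, ?_, ?_, ?_, ?_, ?_, ?_, ?_⟩ <;>
    ext x <;> simp [hρι', ← map_add]

end Retract

theorem idempotent_strictly_splits_mod_ideal_general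
    {X : Type*} [NormedAddCommGroup X] [NormedSpace ℂ X]
    (J : TwoSidedIdeal (X →L[ℂ] X))
    (Q : X →L[ℂ] X) (hQ : Q * Q = Q) (hQJ : Q ∉ J)
    (hsq : Nonempty ((LinearMap.range (Q : X →ₗ[ℂ] X)) ≃L[ℂ]
      ((LinearMap.range (Q : X →ₗ[ℂ] X)) × (LinearMap.range (Q : X →ₗ[ℂ] X))))) :
    ∃ Q₁ Q₂ : X →L[ℂ] X,
      Q₁ * Q₁ = Q₁ ∧ Q₂ * Q₂ = Q₂ ∧ Q₁ * Q₂ = 0 ∧ Q₂ * Q₁ = 0 ∧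
      Q₁ ∉ J ∧ Q₂ ∉ J ∧
      (Q * Q₁ - Q₁ ∈ J ∧ Q₁ * Q - Q₁ ∈ J ∧ Q₁ - Q ∉ J) ∧
      (Q * Q₂ - Q₂ ∈ J ∧ Q₂ * Q - Q₂ ∈ J ∧ Q₂ - Q ∉ J) := by
  obtain ⟨φ⟩ := hsq
  obtain ⟨a₁, b₁, a₂, b₂, h₁, h₂, h₁₂, h₂₁, ha₁, ha₂, hsum⟩ :=
    exists_halving_of_retract_equiv_prod (q := Q) _ _
      (ContinuousLinearMap.IsIdempotentElem.codRestrict_range_comp_subtypeL hQ) rfl φ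
  have hJ₁ : a₁ * b₁ ∈ J → Q ∈ J := TwoSidedIdeal.mem_of_mul_mem h₁ ha₁
  have hJ₂ : a₂ * b₂ ∈ J → Q ∈ J := TwoSidedIdeal.mem_of_mul_mem h₂ ha₂
  have hp₁₂ : a₁ * b₁ * (a₂ * b₂) = 0 := by rw [mul_assoc, ← mul_assoc b₁, h₁₂, zero_mul, mul_zero]
  have hp₂₁ : a₂ * b₂ * (a₁ * b₁) = 0 := by rw [mul_assoc, ← mul_assoc b₂, h₂₁, zero_mul, mul_zero]
  have hp₁ := isIdempotentElem_mul_of_mul_eq h₁ ha₁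
  have hp₂ := isIdempotentElem_mul_of_mul_eq h₂ ha₂
  obtain ⟨hp₁J, hlt₁⟩ := J.isStrictlyBelowMod_of_add_eq hp₁ hp₁₂ hp₂₁ hsum hJ₁ hJ₂ hQJ
  obtain ⟨hp₂J, hlt₂⟩ :=
    J.isStrictlyBelowMod_of_add_eq hp₂ hp₂₁ hp₁₂ ((add_comm _ _).trans hsum) hJ₂ hJ₁ hQJ
  exact ⟨_, _, hp₁, hp₂, hp₁₂, hp₂₁, hp₁J, hp₂J, hlt₁, hlt₂⟩

/-- Let `J` be a closed two-sided ideal of `B(X)` and `Q ∈ B(X)` an idempotent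
with range isomorphic to its square and `Q ∉ J`. Then there exist mutually orthogonal
idempotents `Q₁, Q₂ ∉ J` whose classes in `B(X)/J` are strictly below the class of `Q` in the
idempotent order: `π(Q)π(Qᵢ) = π(Qᵢ) = π(Qᵢ)π(Q)` and `π(Qᵢ) ≠ π(Q)`, expressed via
membership of differences in `J`. -/
theorem idempotent_strictly_splits_mod_ideal
    {X : Type*} [NormedAddCommGroup X] [NormedSpace ℂ X] [CompleteSpace X]
    (J : TwoSidedIdeal (X →L[ℂ] X)) (hJc : IsClosed (J : Set (X →L[ℂ] X)))
    (Q : X →L[ℂ] X) (hQ : Q * Q = Q) (hQJ : Q ∉ J)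
    (hsq : Nonempty ((LinearMap.range (Q : X →ₗ[ℂ] X)) ≃L[ℂ]
      ((LinearMap.range (Q : X →ₗ[ℂ] X)) × (LinearMap.range (Q : X →ₗ[ℂ] X))))) :
    ∃ Q₁ Q₂ : X →L[ℂ] X,
      Q₁ * Q₁ = Q₁ ∧ Q₂ * Q₂ = Q₂ ∧ Q₁ * Q₂ = 0 ∧ Q₂ * Q₁ = 0 ∧
      Q₁ ∉ J ∧ Q₂ ∉ J ∧
      (Q * Q₁ - Q₁ ∈ J ∧ Q₁ * Q - Q₁ ∈ J ∧ Q₁ - Q ∉ J) ∧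
      (Q * Q₂ - Q₂ ∈ J ∧ Q₂ * Q - Q₂ ∈ J ∧ Q₂ - Q ∉ J) :=
  idempotent_strictly_splits_mod_ideal_general J Q hQ hQJ hsq
end

section
/- Every complex Hilbert space H (of arbitrary density character) has the SHAI property: for every nonzero Banach space Y, every surjective algebra homomorphism ψ : B(H) → B(Y) is injective. -/
/-!
Suppose `ψ T = 0` with `T ≠ 0`. Then the kernel of `ψ` contains every rank-one operator, and it is
closed under `⋆` because `T⋆ = D T C` for suitable `C`, `D` (polar decomposition). Lifting a
rank-one idempotent of `B(Y)` with Kaplansky's range-projection formula gives a self-adjoint `h`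
whose image `V` is a minimal idempotent, `V B(Y) V = ℂ V`. As `h - h²` lies in the kernel, so does
the part of `h` with spectrum below `1/2`, hence `V = ψ (g h)` for a `g` vanishing on `(-∞, 1/2]`.
Let `Q` project onto the closure `K` of the range of `g h`. Since `r h Q = Q` for `r = (h ⊔ ½)⁻¹`,
`ψ` maps the corner `Q B(H) Q ≅ B(K)` into the line `ℂ ψ(r) V ψ(r)`, a commutative set. If `K` is
finite-dimensional, `Q` is a sum of rank-one operators. Otherwise `B(K)` contains isometries with
`S₁⋆ S₂ = 0`, and commutativity gives `ψ Q = ψ (S₁ S₁⋆ S₂ S₂⋆) = 0`. Either way `ψ Q = 0`, hence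
`V = ψ (Q g(h)) = 0`, a contradiction.
-/

open Function ContinuousLinearMap InnerProductSpace ComplexStarModule

universe u

section Ring

variable {B : Type*} [Ring B] {e f : B}

theorem IsIdempotentElem.one_add_sub_mul_sub_mul (he : IsIdempotentElem e)
    (hf : IsIdempotentElem f) : (1 + (e - f) * (f - e)) * e = e * f * e := by
  have : (1 + (e - f) * (f - e)) * e = e + e * f * e - e * e * e - f * f * e + f * (e * e) := by
    noncomm_ring
  rw [this, he.eq, he.eq, hf.eq]
  abel

theorem IsIdempotentElem.commute_one_add_sub_mul_sub (he : IsIdempotentElem e)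
    (hf : IsIdempotentElem f) : Commute e (1 + (e - f) * (f - e)) := by
  have : e * (1 + (e - f) * (f - e)) = e + e * e * f - e * e * e - e * (f * f) + e * f * e := by
    noncomm_ring
  rw [Commute, SemiconjBy, he.one_add_sub_mul_sub_mul hf, this, he.eq, he.eq, hf.eq]
  abel

/-- For `f = e⋆` in a C⋆-algebra, `e * f * u⁻¹` is Kaplansky's formula for the range projection
of the idempotent `e`. -/
theorem IsIdempotentElem.mul_mul_inv_one_add_sub_mul_sub (he : IsIdempotentElem e)
    (hf : IsIdempotentElem f) (u : Bˣ) (hu : (u : B) = 1 + (e - f) * (f - e)) :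
    e * f * ↑u⁻¹ * e = e ∧ IsIdempotentElem (e * f * ↑u⁻¹) ∧ ↑u⁻¹ * e * f = e * f * ↑u⁻¹ := by
  have hce : Commute e u := hu ▸ he.commute_one_add_sub_mul_sub hf
  have hcf : Commute f u := by
    rw [hu, show (e - f) * (f - e) = (f - e) * (e - f) by noncomm_ring]
    exact hf.commute_one_add_sub_mul_sub he
  have hve : e * f * ↑u⁻¹ * e = e := calc
    e * f * ↑u⁻¹ * e = e * f * e * ↑u⁻¹ := by
      rw [mul_assoc _ _ e, ← hce.units_inv_right.eq, ← mul_assoc]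
    _ = u * e * ↑u⁻¹ := by rw [hu, he.one_add_sub_mul_sub_mul hf]
    _ = e := by rw [← hce.eq, mul_assoc, Units.mul_inv, mul_one]
  refine ⟨hve, ?_, ?_⟩
  · rw [IsIdempotentElem, ← mul_assoc, ← mul_assoc, hve]
  · rw [← hce.units_inv_right.eq, mul_assoc, ← hcf.units_inv_right.eq, ← mul_assoc]

theorem exists_mul_mul_eq_smul_of_eq_mul {R : Type*} [CommSemiring R] [Algebra R B] {v x : B}
    (he : ∀ b, ∃ c : R, e * b * e = c • e) (hv : v = e * x) (b : B) :
    ∃ c : R, v * b * v = c • v := by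
  obtain ⟨c, hc⟩ := he (x * b)
  exact ⟨c, by rw [hv, ← smul_mul_assoc, ← hc]; noncomm_ring⟩

theorem map_one_eq_zero_of_commute {A F : Type*} [Ring A] [FunLike F A B]
    [NonUnitalRingHomClass F A B] (f : F) {s₁ t₁ s₂ t₂ : A} (h₁ : t₁ * s₁ = 1)
    (h₂ : t₂ * s₂ = 1) (h₁₂ : t₁ * s₂ = 0) (hc₁ : Commute (f s₁) (f t₁))
    (hc₂ : Commute (f s₂) (f t₂)) : f 1 = 0 :=
  calc f 1 = f t₁ * f s₁ * (f t₂ * f s₂) := by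
        rw [← map_mul, ← map_mul, h₁, h₂, ← map_mul, one_mul]
    _ = f s₁ * f (t₁ * s₂) * f t₂ := by rw [← hc₁.eq, ← hc₂.eq, map_mul]; noncomm_ring
    _ = 0 := by rw [h₁₂, map_zero, mul_zero, zero_mul]

end Ring

theorem SeparatingDual.exists_isIdempotentElem_mul_mul_eq_smul {R V : Type*} [Field R]
    [TopologicalSpace R] [IsTopologicalRing R] [AddCommGroup V] [TopologicalSpace V]
    [IsTopologicalAddGroup V] [Module R V] [ContinuousSMul R V] [SeparatingDual R V]
    [Nontrivial V] :
    ∃ e : V →L[R] V, e ≠ 0 ∧ IsIdempotentElem e ∧ ∀ b : V →L[R] V, ∃ c : R, e * b * e = c • e := by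
  obtain ⟨y, hy⟩ := exists_ne (0 : V)
  obtain ⟨g, hg⟩ := SeparatingDual.exists_eq_one (R := R) hy
  have hmul (b : V →L[R] V) : g.smulRight y * b * g.smulRight y = g (b y) • g.smulRight y := by
    ext z
    simp [smul_smul, mul_comm]
  refine ⟨g.smulRight y, fun h => hy ?_, ?_, fun b => ⟨_, hmul b⟩⟩
  · simpa [hg] using congrArg (· y) h
  · simpa [IsIdempotentElem, hg] using hmul 1

section CStarAlgebra

variable {A B F : Type*} [CStarAlgebra A] [PartialOrder A] [StarOrderedRing A] [Ring B]
  [Algebra ℂ B] [FunLike F A B] [AlgHomClass F ℂ A B]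

theorem exists_isSelfAdjoint_map_isIdempotentElem (f : F)
    (hstar : ∀ a, f a = 0 → f (star a) = 0) {p : A} (hp : IsIdempotentElem (f p)) :
    ∃ h : A, IsSelfAdjoint h ∧ IsIdempotentElem (f h) ∧ f h * f p = f p ∧ ∃ x, f h = f p * x := by
  have hp' : IsIdempotentElem (f (star p)) := by
    have := hstar (p * p - p) (by rw [map_sub, map_mul, hp.eq, sub_self])
    rwa [star_sub, star_mul, map_sub, map_mul, sub_eq_zero] at this
  set d := star p - p
  obtain ⟨u, hu⟩ : IsUnit (1 + star d * d) :=
    (isStrictlyPositive_one.add_nonneg (star_mul_self_nonneg d)).isUnit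
  have hu_sa : star (↑u⁻¹ : A) = ↑u⁻¹ := by
    have : star u = u := Units.ext <| by
      rw [Units.coe_star, hu, ((IsSelfAdjoint.one A).add (.star_mul_self d)).star_eq]
    rw [← Units.coe_star_inv, this]
  obtain ⟨hve, hvid, hinv⟩ :=
    hp.mul_mul_inv_one_add_sub_mul_sub hp' (Units.map (f : A →* B) u) (by simp [hu, d])
  simp only [Units.coe_map_inv, MonoidHom.coe_coe] at hve hvid hinv
  set w := p * star p * ↑u⁻¹
  have hw : f w = f p * f (star p) * f ↑u⁻¹ := by simp only [w, map_mul]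
  have hw' : f (star w) = f w := by
    rw [hw, ← hinv]
    simp only [w, star_mul, star_star, hu_sa, map_mul, mul_assoc]
  have hre : f (ℜ w : A) = f w := by
    rw [realPart_apply_coe, ← Complex.coe_smul, map_smul, map_add, hw', ← two_smul ℂ, smul_smul]
    norm_num
  refine ⟨ℜ w, (ℜ w).2, ?_⟩
  rw [hre, hw]
  exact ⟨hvid, hve, _, mul_assoc _ _ _⟩

end CStarAlgebra

section CFC

variable {A : Type*} [Ring A] [StarRing A] [Algebra ℝ A] [TopologicalSpace A]
  [ContinuousFunctionalCalculus ℝ A IsSelfAdjoint]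

theorem exists_map_cfc_eq_of_isIdempotentElem {B F : Type*} [Ring B] [FunLike F A B]
    [RingHomClass F A B] (f : F) {h : A} (hh : IsSelfAdjoint h) (hid : IsIdempotentElem (f h)) :
    ∃ g : ℝ → ℝ, Continuous g ∧ (∀ t ≤ 2⁻¹, g t = 0) ∧ f (cfc g h) = f h := by
  -- `h - g(h) = (h - h²) k(h)` lies in the kernel of `f`
  set k : ℝ → ℝ := fun t => (1 - min t 2⁻¹)⁻¹
  have hk : Continuous k := (continuous_const.sub (continuous_id.min continuous_const)).inv₀
    fun t => (sub_pos.2 ((min_le_right t 2⁻¹).trans_lt (by norm_num))).ne'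
  refine ⟨fun t => t - (t - t ^ 2) * k t, by fun_prop, fun t ht => ?_, ?_⟩
  · have : 1 - t ≠ 0 := by linarith
    simp only [k, min_eq_left ht]
    field_simp
    ring
  · rw [cfc_sub _ _ h, cfc_mul _ _ h (by fun_prop) hk.continuousOn, cfc_sub _ _ h, cfc_pow _ _ h,
      cfc_id' ℝ h, map_sub, map_mul, map_sub, map_pow, sq, hid.eq, sub_self, zero_mul, sub_zero]

theorem exists_isSelfAdjoint_mul_mul_cfc_eq {h : A} (hh : IsSelfAdjoint h) {g : ℝ → ℝ}
    (hg : Continuous g) (hg0 : ∀ t ≤ 2⁻¹, g t = 0) : ∃ r : A, IsSelfAdjoint r ∧ r * h * cfc g h = cfc g h := by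
  set k : ℝ → ℝ := fun t => (max t 2⁻¹)⁻¹
  have hk : Continuous k := (continuous_id.max continuous_const).inv₀ fun t =>
    ((by norm_num : (0 : ℝ) < 2⁻¹).trans_le (le_max_right t 2⁻¹)).ne'
  refine ⟨cfc k h, cfc_predicate _ h, ?_⟩
  have hkh : cfc k h * h = cfc (fun t => k t * t) h := by
    rw [cfc_mul _ _ h hk.continuousOn (by fun_prop), cfc_id' ℝ h]
  rw [hkh, ← cfc_mul _ _ h (by fun_prop) hg.continuousOn]
  refine cfc_congr fun t _ => ?_
  rcases le_or_gt t 2⁻¹ with ht | ht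
  · simp [hg0 t ht]
  · rw [show k t = t⁻¹ from congrArg _ (max_eq_left ht.le), inv_mul_cancel₀ (by positivity),
      one_mul]

end CFC

section Douglas

variable {𝕜 E F G : Type*} [RCLike 𝕜] [NormedAddCommGroup E] [NormedSpace 𝕜 E]
  [NormedAddCommGroup F] [InnerProductSpace 𝕜 F] [CompleteSpace F]
  [NormedAddCommGroup G] [NormedSpace 𝕜 G] [CompleteSpace G]

theorem ContinuousLinearMap.exists_eq_comp_of_norm_le {A : E →L[𝕜] F} {T : E →L[𝕜] G} {c : ℝ}
    (h : ∀ x, ‖T x‖ ≤ c * ‖A x‖) : ∃ C : F →L[𝕜] G, T = C ∘L A := by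
  set K := A.range.topologicalClosure
  let e : E →ₗ[𝕜] K := (A : E →ₗ[𝕜] F).codRestrict K
    fun x => A.range.le_topologicalClosure (LinearMap.mem_range_self (A : E →ₗ[𝕜] F) x)
  have he : DenseRange e := by
    rw [DenseRange, Subtype.dense_iff, ← Set.range_comp]
    exact subset_of_eq (Submodule.topologicalClosure_coe _)
  refine ⟨(T : E →ₗ[𝕜] G).extendOfNorm e ∘L K.orthogonalProjectionOnto, ext fun x => ?_⟩
  have hP : K.orthogonalProjectionOnto (A x) = e x :=
    K.orthogonalProjectionOnto_mem_subspace_eq_self (e x)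
  simp only [comp_apply, hP, LinearMap.extendOfNorm_eq he ⟨c, h⟩]
  rfl

end Douglas

section Hilbert

variable {𝕜 H : Type*} [RCLike 𝕜] [NormedAddCommGroup H] [InnerProductSpace 𝕜 H]

theorem map_rankOne_eq_zero {B F : Type*} [Ring B] [Algebra 𝕜 B] [FunLike F (H →L[𝕜] H) B]
    [AlgHomClass F 𝕜 (H →L[𝕜] H) B] (f : F) {T : H →L[𝕜] H} (hT : f T = 0) (hT0 : T ≠ 0)
    (v w : H) : f (rankOne 𝕜 v w) = 0 := by
  obtain ⟨u, hu⟩ := DFunLike.ne_iff.1 hT0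
  have : rankOne 𝕜 v (T u) * (T * rankOne 𝕜 u w) = inner 𝕜 (T u) (T u) • rankOne 𝕜 v w := by
    rw [mul_def, mul_def, comp_rankOne, rankOne_comp_rankOne]
  have h := congrArg f this
  rw [map_mul, map_mul, hT, zero_mul, mul_zero, map_smul, eq_comm, smul_eq_zero] at h
  exact h.resolve_left (inner_self_ne_zero.2 hu)

theorem map_starProjection_eq_zero_of_finiteDimensional {B F : Type*} [AddCommMonoid B]
    [FunLike F (H →L[𝕜] H) B] [AddMonoidHomClass F (H →L[𝕜] H) B] (f : F)
    (hf : ∀ v w : H, f (rankOne 𝕜 v w) = 0) (K : Submodule 𝕜 H) [FiniteDimensional 𝕜 K] :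
    f K.starProjection = 0 := by
  rw [(stdOrthonormalBasis 𝕜 K).starProjection_eq_sum_rankOne, map_sum]
  exact Finset.sum_eq_zero fun i _ => hf _ _

theorem HilbertBasis.infinite_of_not_finiteDimensional {ι : Type*} (b : HilbertBasis ι 𝕜 H)
    (hH : ¬ FiniteDimensional 𝕜 H) : Infinite ι := by
  by_contra h
  have : Fintype ι := @Fintype.ofFinite ι (not_infinite_iff_finite.1 h)
  exact hH (.of_basis b.toOrthonormalBasis.toBasis)

namespace Submodule

variable (K : Submodule 𝕜 H) [K.HasOrthogonalProjection]

noncomputable def extendByZero : (K →L[𝕜] K) →ₙ+* (H →L[𝕜] H) where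
  toFun S := K.subtypeL ∘L S ∘L K.orthogonalProjectionOnto
  map_mul' S T := by ext x; simp
  map_zero' := by simp
  map_add' S T := by simp [add_comp, comp_add]

theorem extendByZero_one : K.extendByZero 1 = K.starProjection := rfl

theorem starProjection_mul_extendByZero_mul (S : K →L[𝕜] K) :
    K.starProjection * K.extendByZero S * K.starProjection = K.extendByZero S := by
  rw [← extendByZero_one, ← map_mul, ← map_mul, one_mul, mul_one]

end Submodule

variable [CompleteSpace H]

theorem starProjection_topologicalClosure_range_mul (x : H →L[𝕜] H) :
    x.range.topologicalClosure.starProjection * x = x :=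
  ext fun y => Submodule.starProjection_eq_self_iff.2 <|
    x.range.le_topologicalClosure (LinearMap.mem_range_self _ y)

theorem mul_starProjection_topologicalClosure_range {a x : H →L[𝕜] H} (h : a * x = x) :
    a * x.range.topologicalClosure.starProjection = x.range.topologicalClosure.starProjection := by
  have : x.range.topologicalClosure ≤ (a - 1).ker :=
    Submodule.topologicalClosure_minimal _
      (by rintro _ ⟨y, rfl⟩; simpa [sub_eq_zero] using congrArg (· y) h) (isClosed_ker _)
  ext y
  simpa [sub_eq_zero] using this (Submodule.starProjection_apply_mem _ y)

theorem Orthonormal.inner_linearIsometry_eq_zero {ι κ : Type*} {v : ι → H} {u : κ → H}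
    (hv : Orthonormal 𝕜 v) (hu : Orthonormal 𝕜 u) (hvu : ∀ i j, inner 𝕜 (v i) (u j) = 0)
    (f : lp (fun _ : ι => 𝕜) 2) (g : lp (fun _ : κ => 𝕜) 2) :
    inner 𝕜 (hv.orthogonalFamily.linearIsometry f) (hu.orthogonalFamily.linearIsometry g) = 0 := by
  have h₁ : ∀ j, inner 𝕜 (u j) (hv.orthogonalFamily.linearIsometry f) = 0 := fun j =>
    ((hv.orthogonalFamily.hasSum_linearIsometry f).mapL (innerSL 𝕜 (u j))).unique
      (by simp [inner_eq_zero_symm.1 (hvu _ j)])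
  exact ((hu.orthogonalFamily.hasSum_linearIsometry g).mapL (innerSL 𝕜 _)).unique
    (by simp [inner_eq_zero_symm.1 (h₁ _)])

theorem exists_orthogonal_isometries_of_not_finiteDimensional (hH : ¬ FiniteDimensional 𝕜 H) :
    ∃ S₁ S₂ : H →L[𝕜] H, adjoint S₁ * S₁ = 1 ∧ adjoint S₂ * S₂ = 1 ∧ adjoint S₁ * S₂ = 0 := by
  obtain ⟨w, b, -⟩ := exists_hilbertBasis 𝕜 H
  have := b.infinite_of_not_finiteDimensional hH
  obtain ⟨e⟩ : Nonempty (w ⊕ w ≃ w) := Cardinal.eq.1 (by simp [Cardinal.add_eq_self])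
  let S (j : w → w) (hj : j.Injective) : H →L[𝕜] H :=
    ((b.orthonormal.comp j hj).orthogonalFamily.linearIsometry.comp
      b.repr.toLinearIsometry).toContinuousLinearMap
  have hS (j : w → w) (hj : j.Injective) : adjoint (S j hj) * S j hj = 1 :=
    (norm_map_iff_adjoint_comp_self _).1 fun x => LinearIsometry.norm_map _ x
  have h₁ := e.injective.comp Sum.inl_injective
  have h₂ := e.injective.comp Sum.inr_injective
  refine ⟨S _ h₁, S _ h₂, hS _ h₁, hS _ h₂, ext fun x => ext_inner_left 𝕜 fun y => ?_⟩
  rw [mul_apply_eq_comp, adjoint_inner_right, zero_apply, inner_zero_right]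
  exact Orthonormal.inner_linearIsometry_eq_zero (b.orthonormal.comp _ h₁)
    (b.orthonormal.comp _ h₂) (fun i j => b.orthonormal.2 (e.injective.ne Sum.inl_ne_inr)) _ _


end Hilbert

section ComplexHilbert

variable {H : Type*} [NormedAddCommGroup H] [InnerProductSpace ℂ H] [CompleteSpace H]

theorem ContinuousLinearMap.norm_cfcAbs_apply (T : H →L[ℂ] H) (x : H) :
    ‖CFC.abs T x‖ = ‖T x‖ := by
  have h : adjoint (CFC.abs T) ∘L CFC.abs T = adjoint T ∘L T := by
    rw [← star_eq_adjoint, (CFC.abs_nonneg T).isSelfAdjoint.star_eq, ← mul_def,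
      CFC.abs_mul_abs, star_eq_adjoint, mul_def]
  rw [← sq_eq_sq₀ (norm_nonneg _) (norm_nonneg _), apply_norm_sq_eq_inner_adjoint_right,
    apply_norm_sq_eq_inner_adjoint_right, h]

/-- `T = C |T|` and `|T| = D T`, so `T⋆ = |T| C⋆ = D T C⋆`. -/
theorem ContinuousLinearMap.exists_star_eq_mul_mul (T : H →L[ℂ] H) :
    ∃ D C : H →L[ℂ] H, star T = D * T * C := by
  obtain ⟨C, hC⟩ := exists_eq_comp_of_norm_le (A := CFC.abs T) (T := T) (c := 1)
    fun x => by rw [one_mul, norm_cfcAbs_apply]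
  obtain ⟨D, hD⟩ := exists_eq_comp_of_norm_le (A := T) (T := CFC.abs T) (c := 1)
    fun x => by rw [one_mul, norm_cfcAbs_apply]
  refine ⟨D, star C, ?_⟩
  calc star T = star (CFC.abs T) * star C := by rw [← star_mul, mul_def, ← hC]
    _ = D * T * star C := by rw [(CFC.abs_nonneg T).isSelfAdjoint.star_eq, hD]; rfl

theorem map_star_eq_zero {B F : Type*} [MulZeroClass B] [FunLike F (H →L[ℂ] H) B]
    [MulHomClass F (H →L[ℂ] H) B] (f : F) {T : H →L[ℂ] H} (hT : f T = 0) : f (star T) = 0 := by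
  obtain ⟨D, C, h⟩ := T.exists_star_eq_mul_mul
  rw [h, map_mul, map_mul, hT, mul_zero, zero_mul]

theorem map_starProjection_eq_zero_of_not_finiteDimensional {B F : Type*} [Ring B] [Algebra ℂ B]
    [FunLike F (H →L[ℂ] H) B] [AlgHomClass F ℂ (H →L[ℂ] H) B] (f : F) (K : Submodule ℂ H)
    [CompleteSpace K] (hK : ¬ FiniteDimensional ℂ K) {h r : H →L[ℂ] H} (hh : IsSelfAdjoint h)
    (hr : IsSelfAdjoint r) (hmin : ∀ b, ∃ c : ℂ, f h * b * f h = c • f h)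
    (hrh : r * h * K.starProjection = K.starProjection) : f K.starProjection = 0 := by
  have hhr : K.starProjection * h * r = K.starProjection := by
    simpa [mul_assoc, hh.star_eq, hr.star_eq, (isSelfAdjoint_starProjection K).star_eq] using
      congrArg star hrh
  set Q := K.starProjection
  have hφ (S : K →L[ℂ] K) : ∃ c : ℂ, f (K.extendByZero S) = c • (f r * f h * f r) := by
    obtain ⟨c, hc⟩ := hmin (f (K.extendByZero S))
    have : K.extendByZero S = r * h * K.extendByZero S * h * r := calc
      K.extendByZero S = Q * K.extendByZero S * Q := (K.starProjection_mul_extendByZero_mul S).symm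
      _ = r * h * Q * K.extendByZero S * (Q * h * r) := by rw [hrh, hhr]
      _ = r * h * (Q * K.extendByZero S * Q) * h * r := by simp only [mul_assoc]
      _ = r * h * K.extendByZero S * h * r := by rw [K.starProjection_mul_extendByZero_mul]
    refine ⟨c, ?_⟩
    conv_lhs => rw [this]
    rw [map_mul, map_mul, map_mul, map_mul, mul_assoc (f r), mul_assoc (f r), hc, mul_smul_comm,
      smul_mul_assoc, mul_assoc]
  have hcomm (S T : K →L[ℂ] K) : Commute (f (K.extendByZero S)) (f (K.extendByZero T)) := by
    obtain ⟨c, hc⟩ := hφ S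
    obtain ⟨d, hd⟩ := hφ T
    exact hc ▸ hd ▸ ((Commute.refl _).smul_left c).smul_right d
  obtain ⟨S₁, S₂, h₁, h₂, h₁₂⟩ := exists_orthogonal_isometries_of_not_finiteDimensional hK
  exact map_one_eq_zero_of_commute
    ((f : (H →L[ℂ] H) →+* B).toNonUnitalRingHom.comp K.extendByZero) h₁ h₂ h₁₂
    (hcomm _ _) (hcomm _ _)

end ComplexHilbert

/-- Every complex Hilbert space `H` (of arbitrary density character) has the
SHAI property: for every nonzero Banach space `Y`, every surjective algebra homomorphism
`ψ : B(H) → B(Y)` is injective. -/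
theorem hilbert_shai
    {H : Type*} [NormedAddCommGroup H] [InnerProductSpace ℂ H] [CompleteSpace H] :
    ∀ (Y : Type u) [NormedAddCommGroup Y] [NormedSpace ℂ Y] [CompleteSpace Y],
      Nontrivial Y →
        ∀ ψ : (H →L[ℂ] H) →ₐ[ℂ] (Y →L[ℂ] Y), Surjective ψ → Injective ψ := by
  intro Y _ _ _ _ ψ hψ
  refine (injective_iff_map_eq_zero ψ).2 fun T hT => by_contra fun hT0 => ?_
  obtain ⟨e, he0, he, hemin⟩ :=
    SeparatingDual.exists_isIdempotentElem_mul_mul_eq_smul (R := ℂ) (V := Y)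
  obtain ⟨p, rfl⟩ := hψ e
  obtain ⟨h, hh, hid, hhp, x, hx⟩ :=
    exists_isSelfAdjoint_map_isIdempotentElem ψ (fun _ => map_star_eq_zero ψ) he
  obtain ⟨g, hg, hg0, hgh⟩ := exists_map_cfc_eq_of_isIdempotentElem ψ hh hid
  obtain ⟨r, hr, hrh⟩ := exists_isSelfAdjoint_mul_mul_cfc_eq hh hg hg0
  have hQ : ψ (cfc g h).range.topologicalClosure.starProjection = 0 := by
    by_cases hK : FiniteDimensional ℂ (cfc g h).range.topologicalClosure
    · exact map_starProjection_eq_zero_of_finiteDimensional ψ (map_rankOne_eq_zero ψ hT hT0) _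
    · exact map_starProjection_eq_zero_of_not_finiteDimensional ψ _ hK hh hr
        (exists_mul_mul_eq_smul_of_eq_mul hemin hx) (mul_starProjection_topologicalClosure_range hrh)
  apply he0
  rw [← hhp, ← hgh, ← starProjection_topologicalClosure_range_mul (cfc g h), map_mul, hQ, zero_mul,
    zero_mul]
end

section
/- Let E be a Banach space, P, Q ∈ B(E) idempotents with P + Q = I_E and PQ = 0 = QP, X a nonzero Banach space, and ψ : B(E) → B(X) a surjective algebra homomorphism. If ψ(P) = 0 and ψ(Q) = I_X, and the induced surjective homomorphism θ : B(Ran Q) → B(X), θ(T) = ψ(Q|_G ∘ T ∘ Q|^G) (G = Ran Q), is injective, then ψ is injective. -/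
open Function

/-!
Since `ψ (Q * A * Q) = ψ Q * ψ A * ψ Q`, every `A ∈ ker ψ` has compression `Q * A * Q` in the
kernel of `θ`, hence `Q * A * Q = 0`. On the other hand `ker ψ` is a two-sided ideal, and a
nonzero two-sided ideal of `B(E)` contains every rank-one operator `ξ ⊗ x` (Hahn–Banach). As
`ψ Q = 1 ≠ 0` forces `Q ≠ 0`, some rank-one operator has nonzero compression, so `ker ψ = 0`.
-/

namespace ContinuousLinearMap

variable {𝕜 E : Type*} [NontriviallyNormedField 𝕜] [NormedAddCommGroup E] [NormedSpace 𝕜 E]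

theorem subtypeL_comp_comp_codRestrict_range (Q A : E →L[𝕜] E) :
    (LinearMap.range (Q : E →ₗ[𝕜] E)).subtypeL ∘L
        (Q.codRestrict _ (LinearMap.mem_range_self (Q : E →ₗ[𝕜] E)) ∘L A ∘L
          (LinearMap.range (Q : E →ₗ[𝕜] E)).subtypeL) ∘L
        Q.codRestrict _ (LinearMap.mem_range_self (Q : E →ₗ[𝕜] E)) =
      Q * A * Q :=
  rfl

theorem mul_mul_eq_zero_of_compression_injective {S F : Type*} [Semiring S]
    [FunLike F (E →L[𝕜] E) S] [RingHomClass F (E →L[𝕜] E) S] (ψ : F) (Q : E →L[𝕜] E)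
    (hθ : Injective fun T : LinearMap.range (Q : E →ₗ[𝕜] E) →L[𝕜]
        LinearMap.range (Q : E →ₗ[𝕜] E) =>
      ψ ((LinearMap.range (Q : E →ₗ[𝕜] E)).subtypeL ∘L T ∘L
        Q.codRestrict _ (LinearMap.mem_range_self (Q : E →ₗ[𝕜] E))))
    {A : E →L[𝕜] E} (hA : ψ A = 0) : Q * A * Q = 0 := by
  have hT : Q.codRestrict _ (LinearMap.mem_range_self (Q : E →ₗ[𝕜] E)) ∘L A ∘L
      (LinearMap.range (Q : E →ₗ[𝕜] E)).subtypeL = 0 := by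
    apply hθ
    simp only [subtypeL_comp_comp_codRestrict_range, map_mul, hA, mul_zero, zero_mul,
      zero_comp, comp_zero, map_zero]
  rw [← subtypeL_comp_comp_codRestrict_range, hT, zero_comp, comp_zero]

variable [SeparatingDual 𝕜 E]

theorem exists_mul_mul_eq_smulRight_s16 {A : E →L[𝕜] E} (hA : A ≠ 0) (ξ : StrongDual 𝕜 E)
    (x : E) : ∃ B C : E →L[𝕜] E, B * A * C = ξ.smulRight x := by
  obtain ⟨u, hu⟩ : ∃ u, A u ≠ 0 := by simpa [ContinuousLinearMap.ext_iff] using hA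
  obtain ⟨η, hη⟩ := SeparatingDual.exists_eq_one (R := 𝕜) hu
  refine ⟨η.smulRight x, ξ.smulRight u, ?_⟩
  ext v
  simp [hη]

theorem exists_mul_smulRight_mul_ne_zero {Q : E →L[𝕜] E} (hQ : Q ≠ 0) :
    ∃ (ξ : StrongDual 𝕜 E) (x : E), Q * ξ.smulRight x * Q ≠ 0 := by
  obtain ⟨u, hu⟩ : ∃ u, Q u ≠ 0 := by simpa [ContinuousLinearMap.ext_iff] using hQ
  obtain ⟨ξ, hξ⟩ := SeparatingDual.exists_eq_one (R := 𝕜) hu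
  refine ⟨ξ, u, fun h => hu ?_⟩
  simpa [hξ] using congr($h u)

end ContinuousLinearMap

theorem injective_of_compression_injective_general
    {E X : Type*}
    [NormedAddCommGroup E] [NormedSpace ℂ E]
    [NormedAddCommGroup X] [NormedSpace ℂ X] [Nontrivial X]
    (Q : E →L[ℂ] E)
    (ψ : (E →L[ℂ] E) →ₐ[ℂ] (X →L[ℂ] X))
    (hψQ : ψ Q = 1)
    (hθ : Injective (fun T : (↥(LinearMap.range (Q : E →ₗ[ℂ] E)) →L[ℂ]
        ↥(LinearMap.range (Q : E →ₗ[ℂ] E))) =>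
      ψ ((LinearMap.range (Q : E →ₗ[ℂ] E)).subtypeL ∘L T ∘L
        Q.codRestrict (LinearMap.range (Q : E →ₗ[ℂ] E))
          (fun x => LinearMap.mem_range_self (Q : E →ₗ[ℂ] E) x)))) :
    Injective ψ := by
  rw [injective_iff_map_eq_zero]
  intro A hA
  by_contra hA0
  have hQ0 : Q ≠ 0 := by
    rintro rfl
    exact zero_ne_one (hψQ ▸ (map_zero ψ).symm)
  obtain ⟨ξ, x, hne⟩ := ContinuousLinearMap.exists_mul_smulRight_mul_ne_zero hQ0
  obtain ⟨B, C, hBAC⟩ := ContinuousLinearMap.exists_mul_mul_eq_smulRight_s16 hA0 ξ x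
  refine hne (hBAC ▸ ContinuousLinearMap.mul_mul_eq_zero_of_compression_injective ψ Q hθ ?_)
  rw [map_mul, map_mul, hA, mul_zero, zero_mul]

/-- Let `E` be a Banach space, `P, Q ∈ B(E)` idempotents with `P + Q = I`,
`PQ = 0 = QP`, `X` a nonzero Banach space and `ψ : B(E) → B(X)` a surjective algebra
homomorphism with `ψ(P) = 0` and `ψ(Q) = I`. If the induced homomorphism
`θ : B(Ran Q) → B(X)`, `θ(T) = ψ(Q|_G ∘ T ∘ Q|^G)` (`G = Ran Q`), is injective, then `ψ` is
injective. -/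
theorem injective_of_compression_injective
    {E X : Type*}
    [NormedAddCommGroup E] [NormedSpace ℂ E] [CompleteSpace E]
    [NormedAddCommGroup X] [NormedSpace ℂ X] [CompleteSpace X] [Nontrivial X]
    (P Q : E →L[ℂ] E) (hP : P * P = P) (hQ : Q * Q = Q)
    (hPQ : P + Q = 1) (hPQ0 : P * Q = 0) (hQP0 : Q * P = 0)
    (ψ : (E →L[ℂ] E) →ₐ[ℂ] (X →L[ℂ] X)) (hsurj : Surjective ψ)
    (hψP : ψ P = 0) (hψQ : ψ Q = 1)
    (hθ : Injective (fun T : (↥(LinearMap.range (Q : E →ₗ[ℂ] E)) →L[ℂ]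
        ↥(LinearMap.range (Q : E →ₗ[ℂ] E))) =>
      ψ ((LinearMap.range (Q : E →ₗ[ℂ] E)).subtypeL ∘L T ∘L
        Q.codRestrict (LinearMap.range (Q : E →ₗ[ℂ] E))
          (fun x => LinearMap.mem_range_self (Q : E →ₗ[ℂ] E) x)))) :
    Injective ψ :=
  injective_of_compression_injective_general Q ψ hψQ hθ
end
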